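/- Let p/q be rational, A : ℝ/ℤ → SL(2,ℝ), A_s(x) = A(x + (s−1)p/q)···A(x) for s ≥ 1 with A_0 = id, l ∈ {0, 1}, and W_k(x) = ∑_{s=0}^{q−1} R_{ks/q} R_{ls/(2q)} A_s(x) for 0 ≤ k ≤ q−1. Then for every x ∈ ℝ/ℤ and every vector y ∈ ℝ², ∑_{k=0}^{q−1} ‖W_k(x)·y‖² = q ∑_{s=0}^{q−1} ‖A_s(x)·y‖². Consequently, for every x there exists a unit vector y ∈ ℝ² with ∑_{k=0}^{q−1} ‖W_k(x)·y‖² ≥ q². -/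

import Mathlib

open Real

noncomputable section

/-- The rotation matrix `R_θ ∈ SO(2,ℝ)`. -/
def RotR (θ : ℝ) : Matrix (Fin 2) (Fin 2) ℝ :=
  !![Real.cos (2 * π * θ), -Real.sin (2 * π * θ);
     Real.sin (2 * π * θ), Real.cos (2 * π * θ)]

/-- Iterates of the cocycle: `cocycleIterR α A s x = A(x+(s-1)α) ⋯ A(x)`, with `A_0 = id`. -/
def cocycleIterR (α : ℝ) (A : ℝ → Matrix (Fin 2) (Fin 2) ℝ) :
    ℕ → ℝ → Matrix (Fin 2) (Fin 2) ℝ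
  | 0 => fun _ => 1
  | s + 1 => fun x => A (x + (s : ℝ) * α) * cocycleIterR α A s x

/-- The discrete Fourier transform `W_k(x) = ∑_{s=0}^{q−1} R_{ks/q} R_{ls/(2q)} A_s(x)`. -/
def Wdft (p : ℤ) (q : ℕ) (l : ℕ) (A : ℝ → Matrix (Fin 2) (Fin 2) ℝ) (k : ℕ) (x : ℝ) :
    Matrix (Fin 2) (Fin 2) ℝ :=
  ∑ s ∈ Finset.range q,
    RotR (((k * s : ℕ) : ℝ) / (q : ℝ)) * RotR (((l * s : ℕ) : ℝ) / (2 * (q : ℝ))) *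
      cocycleIterR ((p : ℝ) / (q : ℝ)) A s x

/-- The squared Euclidean norm on `ℝ²`. -/
def sqNorm (v : Fin 2 → ℝ) : ℝ := v 0 ^ 2 + v 1 ^ 2

/-!
Identify `ℝ²` with `ℂ`, so that `R_θ` acts as multiplication by `e^{2πiθ}`. Then `W_k(x) y`
becomes `∑_s ζ^{ks} z_s` with `ζ = e^{2πi/q}` a primitive `q`-th root of unity and
`z_s = e^{πi l s/q} A_s(x) y`, and the identity is Parseval's identity for this discrete Fourier
transform: the cross terms vanish because `∑_k (ζ^s · conj ζ^t)^k = 0` for `s ≠ t`.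
For the consequence, `‖M e₁‖² + ‖M e₂‖² ≥ 2` when `det M = 1`, so one of `e₁, e₂` satisfies
`∑_s ‖A_s(x) e‖² ≥ q`.
-/

open Complex Finset Matrix ComplexConjugate

namespace IsPrimitiveRoot

variable {ζ : ℂ} {q : ℕ}

theorem sum_pow_mul_conj_pow (hζ : IsPrimitiveRoot ζ q) {s t : ℕ} (hs : s < q) (ht : t < q) :
    ∑ k ∈ range q, ζ ^ (k * s) * conj (ζ ^ (k * t)) = if s = t then (q : ℂ) else 0 := by
  have hnorm : ‖ζ ^ t‖ = 1 := by rw [norm_pow, hζ.norm'_eq_one (by omega), one_pow]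
  have hζt : ζ ^ t ≠ 0 := norm_ne_zero_iff.mp (by rw [hnorm]; exact one_ne_zero)
  set w := ζ ^ s / ζ ^ t
  have hterm : ∀ k, ζ ^ (k * s) * conj (ζ ^ (k * t)) = w ^ k := fun k => by
    rw [mul_comm k s, mul_comm k t, pow_mul, pow_mul, map_pow, ← inv_eq_conj hnorm, div_pow,
      inv_pow, div_eq_mul_inv]
  simp only [hterm]
  split_ifs with hst
  · simp [w, hst, hζt]
  · have hw : w ≠ 1 := fun h => hst (hζ.pow_inj hs ht ((div_eq_one_iff_eq hζt).mp h))
    have hwq : w ^ q = 1 := by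
      rw [div_pow, ← pow_mul, ← pow_mul, mul_comm s, mul_comm t, pow_mul, pow_mul, hζ.pow_eq_one,
        one_pow, one_pow, div_one]
    rw [geom_sum_eq hw, hwq, sub_self, zero_div]

theorem sum_normSq_sum_pow_mul (hζ : IsPrimitiveRoot ζ q) (z : ℕ → ℂ) :
    ∑ k ∈ range q, normSq (∑ s ∈ range q, ζ ^ (k * s) * z s) =
      q * ∑ s ∈ range q, normSq (z s) := by
  apply ofReal_injective
  push_cast
  simp only [← mul_conj, map_sum, map_mul, sum_mul_sum]
  calc ∑ k ∈ range q, ∑ s ∈ range q, ∑ t ∈ range q,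
        ζ ^ (k * s) * z s * (conj (ζ ^ (k * t)) * conj (z t))
      = ∑ s ∈ range q, ∑ t ∈ range q,
          (∑ k ∈ range q, ζ ^ (k * s) * conj (ζ ^ (k * t))) * (z s * conj (z t)) := by
        rw [sum_comm]
        refine sum_congr rfl fun s _ => ?_
        rw [sum_comm]
        simp only [sum_mul]
        exact sum_congr rfl fun t _ => sum_congr rfl fun k _ => by ring
    _ = ∑ s ∈ range q, ∑ t ∈ range q, (if s = t then (q : ℂ) else 0) * (z s * conj (z t)) :=
        sum_congr rfl fun s hs => sum_congr rfl fun t ht => by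
          rw [hζ.sum_pow_mul_conj_pow (mem_range.mp hs) (mem_range.mp ht)]
    _ = q * ∑ s ∈ range q, z s * conj (z s) := by
        rw [mul_sum]
        refine sum_congr rfl fun s hs => ?_
        simp [ite_mul, mem_range.mp hs]

end IsPrimitiveRoot

def toComplex : (Fin 2 → ℝ) →ₗ[ℝ] ℂ := Complex.basisOneI.equivFun.symm.toLinearMap

theorem toComplex_apply (v : Fin 2 → ℝ) : toComplex v = v 0 + v 1 * I := by
  simp [toComplex, Fin.sum_univ_two]

theorem normSq_toComplex (v : Fin 2 → ℝ) : normSq (toComplex v) = sqNorm v := by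
  simp [toComplex_apply, sqNorm, normSq_apply, sq]

theorem toComplex_rotR_mulVec (θ : ℝ) (v : Fin 2 → ℝ) :
    toComplex (RotR θ *ᵥ v) = cexp ((2 * π * θ : ℝ) * I) * toComplex v := by
  rw [exp_mul_I, ← ofReal_cos, ← ofReal_sin]
  apply Complex.ext <;> simp [toComplex_apply, RotR, dotProduct, Fin.sum_univ_two] <;> ring

theorem sqNorm_rotR_mulVec (θ : ℝ) (v : Fin 2 → ℝ) : sqNorm (RotR θ *ᵥ v) = sqNorm v := by
  rw [← normSq_toComplex, toComplex_rotR_mulVec, normSq_mul, normSq_toComplex,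
    normSq_eq_norm_sq, norm_exp_ofReal_mul_I, one_pow, one_mul]

theorem sum_sqNorm_sum_rotR_mul_mulVec {q : ℕ} (hq : q ≠ 0) (C : ℕ → Matrix (Fin 2) (Fin 2) ℝ)
    (y : Fin 2 → ℝ) :
    ∑ k ∈ range q, sqNorm ((∑ s ∈ range q, RotR (((k * s : ℕ) : ℝ) / q) * C s) *ᵥ y) =
      q * ∑ s ∈ range q, sqNorm (C s *ᵥ y) := by
  have hζ := Complex.isPrimitiveRoot_exp q hq
  have hrot : ∀ k s, toComplex (RotR (((k * s : ℕ) : ℝ) / q) *ᵥ (C s *ᵥ y)) =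
      cexp (2 * π * I / q) ^ (k * s) * toComplex (C s *ᵥ y) := fun k s => by
    rw [toComplex_rotR_mulVec, ← Complex.exp_nat_mul]
    push_cast
    ring_nf
  simp only [← normSq_toComplex, sum_mulVec, ← mulVec_mulVec, map_sum, hrot]
  exact hζ.sum_normSq_sum_pow_mul _

theorem det_cocycleIterR {α : ℝ} {A : ℝ → Matrix (Fin 2) (Fin 2) ℝ} (hdet : ∀ x, (A x).det = 1)
    (s : ℕ) (x : ℝ) : (cocycleIterR α A s x).det = 1 := by
  induction s with
  | zero => simp [cocycleIterR]
  | succ s ih => simp [cocycleIterR, det_mul, hdet, ih]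

theorem two_le_sqNorm_mulVec_add {M : Matrix (Fin 2) (Fin 2) ℝ} (hM : M.det = 1) :
    2 ≤ sqNorm (M *ᵥ ![1, 0]) + sqNorm (M *ᵥ ![0, 1]) := by
  rw [det_fin_two] at hM
  simp only [sqNorm, mulVec, dotProduct, Fin.sum_univ_two, cons_val_zero, cons_val_one,
    cons_val_fin_one, mul_one, mul_zero, add_zero, zero_add]
  nlinarith [sq_nonneg (M 0 0 - M 1 1), sq_nonneg (M 0 1 + M 1 0)]

theorem exists_sqNorm_eq_one_card_le_sum {ι : Type*} (F : Finset ι)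
    {M : ι → Matrix (Fin 2) (Fin 2) ℝ} (hM : ∀ i ∈ F, (M i).det = 1) :
    ∃ y, sqNorm y = 1 ∧ (#F : ℝ) ≤ ∑ i ∈ F, sqNorm (M i *ᵥ y) := by
  have h : 2 * (#F : ℝ) ≤
      ∑ i ∈ F, sqNorm (M i *ᵥ ![1, 0]) + ∑ i ∈ F, sqNorm (M i *ᵥ ![0, 1]) := by
    rw [← sum_add_distrib, mul_comm, ← nsmul_eq_mul, ← sum_const]
    exact sum_le_sum fun i hi => two_le_sqNorm_mulVec_add (hM i hi)
  by_cases h₀ : (#F : ℝ) ≤ ∑ i ∈ F, sqNorm (M i *ᵥ ![1, 0])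
  · exact ⟨![1, 0], by simp [sqNorm], h₀⟩
  · exact ⟨![0, 1], by simp [sqNorm], by linarith⟩

theorem Wdft_parseval_general (p : ℤ) (q : ℕ) (hq : 0 < q)
    (A : ℝ → Matrix (Fin 2) (Fin 2) ℝ)
    (hdet : ∀ x : ℝ, (A x).det = 1)
    (l : ℕ) (x : ℝ) :
    (∀ y : Fin 2 → ℝ,
      ∑ k ∈ Finset.range q, sqNorm ((Wdft p q l A k x).mulVec y) =
        (q : ℝ) * ∑ s ∈ Finset.range q,
          sqNorm ((cocycleIterR ((p : ℝ) / (q : ℝ)) A s x).mulVec y)) ∧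
    ∃ y : Fin 2 → ℝ, sqNorm y = 1 ∧
      (q : ℝ) ^ 2 ≤ ∑ k ∈ Finset.range q, sqNorm ((Wdft p q l A k x).mulVec y) := by
  have parseval : ∀ y : Fin 2 → ℝ,
      ∑ k ∈ range q, sqNorm (Wdft p q l A k x *ᵥ y) =
        q * ∑ s ∈ range q, sqNorm (cocycleIterR (p / q) A s x *ᵥ y) := fun y => by
    simp only [Wdft, mul_assoc]
    rw [sum_sqNorm_sum_rotR_mul_mulVec hq.ne']
    simp only [← mulVec_mulVec, sqNorm_rotR_mulVec]
  refine ⟨parseval, ?_⟩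
  obtain ⟨y, hy, hle⟩ := exists_sqNorm_eq_one_card_le_sum (range q)
    (M := fun s => cocycleIterR (p / q) A s x) fun s _ => det_cocycleIterR hdet s x
  refine ⟨y, hy, ?_⟩
  rw [card_range] at hle
  rw [parseval, sq]
  exact mul_le_mul_of_nonneg_left hle q.cast_nonneg

/-- **Parseval identity for the `W_k`, and its consequence:**
`∑_{k<q} ‖W_k(x)y‖² = q ∑_{s<q} ‖A_s(x)y‖²` for every `y ∈ ℝ²`, and hence for every `x`
there is a unit vector `y` with `∑_{k<q} ‖W_k(x)y‖² ≥ q²`. -/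
theorem Wdft_parseval (p : ℤ) (q : ℕ) (hq : 0 < q)
    (A : ℝ → Matrix (Fin 2) (Fin 2) ℝ)
    (hper : ∀ x : ℝ, A (x + 1) = A x) (hdet : ∀ x : ℝ, (A x).det = 1)
    (l : ℕ) (hl : l ≤ 1) (x : ℝ) :
    (∀ y : Fin 2 → ℝ,
      ∑ k ∈ Finset.range q, sqNorm ((Wdft p q l A k x).mulVec y) =
        (q : ℝ) * ∑ s ∈ Finset.range q,
          sqNorm ((cocycleIterR ((p : ℝ) / (q : ℝ)) A s x).mulVec y)) ∧
    ∃ y : Fin 2 → ℝ, sqNorm y = 1 ∧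
      (q : ℝ) ^ 2 ≤ ∑ k ∈ Finset.range q, sqNorm ((Wdft p q l A k x).mulVec y) :=
  Wdft_parseval_general p q hq A hdet l x
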